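/- Let A be a symmetric positive definite n×n real matrix, C an n×m real matrix, and consider the saddle-point system A·u - C·p = 0, Cᵀ·u = f (with C of full column rank m). Then u satisfies ⟨A·u, u⟩ = ⟨f, p⟩, and if moreover there is β > 0 with ‖q‖ ≤ β·sup_{v≠0} ⟨Cᵀ v, q⟩/‖v‖_A for all q ∈ ℝᵐ (where ‖v‖_A² = ⟨Av,v⟩), then ‖u‖_A ≤ β·‖f‖. -/

import Mathlib

open Matrix

/-- Symmetry of the bilinear form of a symmetric matrix. -/
lemma symm_bilin {n : ℕ} (A : Matrix (Fin n) (Fin n) ℝ) (hA : A.IsSymm)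
    (v w : Fin n → ℝ) : (A.mulVec v) ⬝ᵥ w = (A.mulVec w) ⬝ᵥ v := by
  rw [dotProduct_comm, dotProduct_mulVec, ← mulVec_transpose, hA.eq]

/-- Cauchy–Schwarz for the bilinear form of a symmetric PSD matrix. -/
lemma cs_bilin {n : ℕ} (A : Matrix (Fin n) (Fin n) ℝ) (hA : A.IsSymm)
    (hpsd : A.PosSemidef) (v w : Fin n → ℝ) :
    (A.mulVec v) ⬝ᵥ w ≤
      Real.sqrt ((A.mulVec v) ⬝ᵥ v) * Real.sqrt ((A.mulVec w) ⬝ᵥ w) := by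
  have hnn : ∀ x : Fin n → ℝ, 0 ≤ (A.mulVec x) ⬝ᵥ x := fun x => by
    have := hpsd.dotProduct_mulVec_nonneg x
    simpa [dotProduct_comm] using this
  set a := (A.mulVec v) ⬝ᵥ v with ha
  set b := (A.mulVec v) ⬝ᵥ w with hb
  set c := (A.mulVec w) ⬝ᵥ w with hc
  have key : ∀ x : ℝ, 0 ≤ a * (x * x) + (2 * b) * x + c := by
    intro x
    have h0 := hnn (x • v + w)
    have hexp : (A.mulVec (x • v + w)) ⬝ᵥ (x • v + w)
        = a * (x * x) + (2 * b) * x + c := by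
      have hsym := symm_bilin A hA w v
      simp only [mulVec_add, mulVec_smul, add_dotProduct, smul_dotProduct,
        dotProduct_add, dotProduct_smul, smul_eq_mul]
      rw [← hb, ← ha, ← hc]
      rw [show (A.mulVec w) ⬝ᵥ v = b by rw [hsym, hb]]
      ring
    rw [hexp] at h0
    exact h0
  have hd := discrim_le_zero key
  have hb2 : b ^ 2 ≤ a * c := by
    have : (2 * b) ^ 2 - 4 * a * c ≤ 0 := hd
    nlinarith
  calc b ≤ |b| := le_abs_self b
    _ = Real.sqrt (b ^ 2) := (Real.sqrt_sq_eq_abs b).symm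
    _ ≤ Real.sqrt (a * c) := Real.sqrt_le_sqrt hb2
    _ = Real.sqrt a * Real.sqrt c := Real.sqrt_mul (hnn v) c

/-- Cauchy–Schwarz for the standard dot product. -/
lemma cs_dot {m : ℕ} (f p : Fin m → ℝ) :
    f ⬝ᵥ p ≤ Real.sqrt (f ⬝ᵥ f) * Real.sqrt (p ⬝ᵥ p) := by
  have := cs_bilin (1 : Matrix (Fin m) (Fin m) ℝ) isSymm_one
    Matrix.PosSemidef.one f p
  simpa using this

theorem stmt_13 (n m : ℕ) (A : Matrix (Fin n) (Fin n) ℝ) (C : Matrix (Fin n) (Fin m) ℝ)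
    (hA : A.IsSymm) (hApd : A.PosDef) (hrank : C.rank = m)
    (u : Fin n → ℝ) (p f : Fin m → ℝ)
    (h1 : A.mulVec u - C.mulVec p = 0)
    (h2 : C.transpose.mulVec u = f) :
    (A.mulVec u) ⬝ᵥ u = f ⬝ᵥ p ∧
    ∀ β : ℝ, 0 < β →
      (∀ q : Fin m → ℝ,
        Real.sqrt (q ⬝ᵥ q) ≤
          β * ⨆ v : {v : Fin n → ℝ // v ≠ 0},
            ((C.transpose.mulVec v.1) ⬝ᵥ q) / Real.sqrt ((A.mulVec v.1) ⬝ᵥ v.1)) →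
      Real.sqrt ((A.mulVec u) ⬝ᵥ u) ≤ β * Real.sqrt (f ⬝ᵥ f) := by
  have hAu : A.mulVec u = C.mulVec p := sub_eq_zero.mp h1
  have hadj : ∀ (v : Fin n → ℝ) (q : Fin m → ℝ),
      (C.transpose.mulVec v) ⬝ᵥ q = v ⬝ᵥ (C.mulVec q) := by
    intro v q
    rw [mulVec_transpose, ← dotProduct_mulVec]
  have part1 : (A.mulVec u) ⬝ᵥ u = f ⬝ᵥ p := by
    rw [hAu, dotProduct_comm, ← hadj u p, h2]
  refine ⟨part1, ?_⟩
  intro β hβ hinf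
  set s := Real.sqrt ((A.mulVec u) ⬝ᵥ u) with hs
  have hQnn : 0 ≤ (A.mulVec u) ⬝ᵥ u := by
    have := hApd.posSemidef.dotProduct_mulVec_nonneg u
    simpa [dotProduct_comm] using this
  by_cases hne : Nonempty {v : Fin n → ℝ // v ≠ 0}
  · -- bound each term of the sup by s
    have hterm : ∀ v : {v : Fin n → ℝ // v ≠ 0},
        ((C.transpose.mulVec v.1) ⬝ᵥ p) / Real.sqrt ((A.mulVec v.1) ⬝ᵥ v.1) ≤ s := by
      intro v
      have hvpos : 0 < (A.mulVec v.1) ⬝ᵥ v.1 := by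
        have := hApd.dotProduct_mulVec_pos v.2
        simpa [dotProduct_comm] using this
      have hsq : 0 < Real.sqrt ((A.mulVec v.1) ⬝ᵥ v.1) := Real.sqrt_pos.mpr hvpos
      rw [div_le_iff₀ hsq]
      have : (C.transpose.mulVec v.1) ⬝ᵥ p = (A.mulVec v.1) ⬝ᵥ u := by
        rw [hadj, ← hAu, dotProduct_comm, symm_bilin A hA u v.1]
      rw [this]
      calc (A.mulVec v.1) ⬝ᵥ u
          ≤ Real.sqrt ((A.mulVec v.1) ⬝ᵥ v.1) * s :=
            cs_bilin A hA hApd.posSemidef v.1 u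
        _ = s * Real.sqrt ((A.mulVec v.1) ⬝ᵥ v.1) := mul_comm _ _
    have hsup : (⨆ v : {v : Fin n → ℝ // v ≠ 0},
        ((C.transpose.mulVec v.1) ⬝ᵥ p) / Real.sqrt ((A.mulVec v.1) ⬝ᵥ v.1)) ≤ s :=
      ciSup_le hterm
    have hp : Real.sqrt (p ⬝ᵥ p) ≤ β * s :=
      le_trans (hinf p) (mul_le_mul_of_nonneg_left hsup hβ.le)
    have hss : s * s = (A.mulVec u) ⬝ᵥ u := Real.mul_self_sqrt hQnn
    have hchain : s * s ≤ Real.sqrt (f ⬝ᵥ f) * (β * s) := by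
      rw [hss, part1]
      calc f ⬝ᵥ p ≤ Real.sqrt (f ⬝ᵥ f) * Real.sqrt (p ⬝ᵥ p) := cs_dot f p
        _ ≤ Real.sqrt (f ⬝ᵥ f) * (β * s) :=
            mul_le_mul_of_nonneg_left hp (Real.sqrt_nonneg _)
    rcases eq_or_lt_of_le (Real.sqrt_nonneg ((A.mulVec u) ⬝ᵥ u)) with h0 | hpos
    · rw [← hs] at h0
      rw [← h0]
      positivity
    · rw [← hs] at hpos
      have : s * s ≤ (β * Real.sqrt (f ⬝ᵥ f)) * s := by
        calc s * s ≤ Real.sqrt (f ⬝ᵥ f) * (β * s) := hchain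
          _ = (β * Real.sqrt (f ⬝ᵥ f)) * s := by ring
      exact le_of_mul_le_mul_right this hpos
  · -- the index type is empty: every vector is zero, so u = 0
    have hu0 : u = 0 := by
      by_contra h
      exact hne ⟨⟨u, h⟩⟩
    rw [hs, hu0]
    simp only [mulVec_zero, dotProduct_zero, zero_dotProduct, Real.sqrt_zero]
    positivity
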